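/- For any CA program P, every restart-safe path in the graph EZ_P is finite. -/

import Mathlib

set_option autoImplicit false

namespace EZCSP

/-! ### Regular logic programs -/

/-- A literal: an atom paired with a polarity (`true` = positive atom `a`,
`false` = negated atom `¬ a`). -/
abbrev Lit (α : Type) := α × Bool

/-- The complement of a literal. -/
def complLit {α : Type} (l : Lit α) : Lit α := (l.1, !l.2)

/-- A rule `a₀ ← a₁,…,a_l, not a_{l+1},…,not a_m, not not a_{m+1},…,not not a_n`
of a regular program.  `head = none` represents `⊥` (a denial). -/
structure Rule (α : Type) where
  head : Option α
  pos : Finset α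
  neg : Finset α
  dneg : Finset α
deriving DecidableEq

variable {α V D : Type}

/-- A rule is a denial when its head is `⊥`. -/
def Rule.isDenial (r : Rule α) : Prop := r.head = none

/-- The atoms occurring in a rule. -/
def Rule.atoms [DecidableEq α] (r : Rule α) : Finset α :=
  (r.head.elim (∅ : Finset α) fun a => {a}) ∪ r.pos ∪ r.neg ∪ r.dneg

/-- `At(Π)`: the atoms occurring in a program. -/
def progAtoms [DecidableEq α] (Pi : Finset (Rule α)) : Finset α :=
  Pi.biUnion Rule.atoms

/-- Satisfaction of the body `a₁∧…∧a_l∧¬a_{l+1}∧…∧¬a_m∧a_{m+1}∧…∧a_n` of a rule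
by a set `X` of atoms (viewed as an interpretation). -/
def bodySat (X : Set α) (r : Rule α) : Prop :=
  (∀ a ∈ r.pos, a ∈ X) ∧ (∀ a ∈ r.neg, a ∉ X) ∧ (∀ a ∈ r.dneg, a ∈ X)

/-- Satisfaction of the head of a rule by `X` (`⊥` is never satisfied). -/
def headSat (X : Set α) (r : Rule α) : Prop :=
  ∃ a, r.head = some a ∧ a ∈ X

/-- Satisfaction by `X` of the clause corresponding to a rule. -/
def clauseSat (X : Set α) (r : Rule α) : Prop :=
  bodySat X r → headSat X r

/-- `Y` satisfies `(Π^X)^cl`, the set of clauses of the reduct of `Π` w.r.t. `X`. -/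
def reductModels (Pi : Finset (Rule α)) (X Y : Set α) : Prop :=
  ∀ r ∈ Pi, bodySat X r → (∀ a ∈ r.pos, a ∈ Y) → ∃ a, r.head = some a ∧ a ∈ Y

/-- `X` is an answer set of `Π`: it is subset-minimal among the sets of atoms
satisfying `(Π^X)^cl`. -/
def AnswerSet (Pi : Finset (Rule α)) (X : Set α) : Prop :=
  reductModels Pi X X ∧ ∀ Y : Set α, reductModels Pi X Y → Y ⊆ X → Y = X

/-- `M⁺`: the atoms occurring positively in a set of literals. -/
def Mplus (M : Set (Lit α)) : Set α := {a | (a, true) ∈ M}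

/-- A set of literals is consistent when it contains no complementary pair. -/
def LConsistent (M : Set (Lit α)) : Prop :=
  ∀ a : α, ¬((a, true) ∈ M ∧ (a, false) ∈ M)

/-- `M` is complete over the alphabet `σ`. -/
def LComplete (M : Set (Lit α)) (σ : Finset α) : Prop :=
  ∀ a ∈ σ, (a, true) ∈ M ∨ (a, false) ∈ M

/-- All literals of `M` are over the alphabet `σ`. -/
def LitsOver (M : Set (Lit α)) (σ : Finset α) : Prop :=
  ∀ l ∈ M, l.1 ∈ σ

/-- `U` is unfounded on the set `M` of literals with respect to `Π`:
`U` consists of atoms occurring in `Π` and for every `a ∈ U` and every body `B`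
of a rule of `Π` with head `a`, `M ∩ B̄ ≠ ∅` or `U ∩ B⁺ ≠ ∅`. -/
def UnfoundedOn [DecidableEq α] (Pi : Finset (Rule α)) (M : Set (Lit α)) (U : Set α) : Prop :=
  (∀ a ∈ U, a ∈ progAtoms Pi) ∧
  ∀ r ∈ Pi, ∀ a : α, r.head = some a → a ∈ U →
    ((∃ b ∈ r.pos, (b, false) ∈ M) ∨ (∃ b ∈ r.neg, (b, true) ∈ M) ∨
      (∃ b ∈ r.dneg, (b, false) ∈ M)) ∨ (∃ b ∈ r.pos, b ∈ U)

/-! ### Constraint satisfaction and CA programs -/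

/-- The choice rule `{c}`, i.e. `c ← not not c`. -/
def choiceRule (c : α) : Rule α := ⟨some c, ∅, ∅, {c}⟩

/-- The asp-abstraction `Π[𝒞]`: `Π` extended with a choice rule `{c}` for each `c ∈ 𝒞`. -/
def aspAbs [DecidableEq α] (Pi : Finset (Rule α)) (C : Finset α) : Finset (Rule α) :=
  Pi ∪ C.image choiceRule

/-- A constraint `⟨t, R⟩`: a tuple of variables together with a relation on the domain. -/
structure Constraint (V D : Type) where
  vars : List V
  rel : Set (List D)

/-- An evaluation `ν` satisfies a constraint. -/
def Constraint.sat (c : Constraint V D) (ν : V → D) : Prop := c.vars.map ν ∈ c.rel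

/-- The complement `⟨t, D^k ∖ R⟩` of a constraint `⟨t, R⟩`. -/
def Constraint.compl (c : Constraint V D) : Constraint V D :=
  ⟨c.vars, {l | l.length = c.vars.length ∧ l ∉ c.rel}⟩

/-- The csp-abstraction `K_{P,M}` determined by the constraint atoms `C`, the mapping `γ`
and the set `M` of literals has a solution. -/
def cspSolvable (C : Finset α) (γ : α → Constraint V D) (M : Set (Lit α)) : Prop :=
  ∃ ν : V → D, ∀ c ∈ C,
    ((c, true) ∈ M → (γ c).sat ν) ∧ ((c, false) ∈ M → (γ c).compl.sat ν)

/-- A logic program with constraint atoms (CA program) `⟨Π,𝒞,γ,D⟩`. -/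
structure CAProgram (α V D : Type) [DecidableEq α] where
  prog : Finset (Rule α)
  catoms : Finset α
  γ : α → Constraint V D
  head_not_catom : ∀ r ∈ prog, ∀ a : α, r.head = some a → a ∉ catoms
  catoms_sub : catoms ⊆ progAtoms prog

/-- Answer sets of a CA program with components `Π`, `C`, `γ`:  a consistent and
complete set `M` of literals over `At(Π)` such that `M⁺` is an answer set of `Π[𝒞]`
and `K_{P,M}` has a solution. -/
def CAAnswerSetG [DecidableEq α] (Pi : Finset (Rule α)) (C : Finset α)
    (γ : α → Constraint V D) (M : Set (Lit α)) : Prop :=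
  LConsistent M ∧ LComplete M (progAtoms Pi) ∧ LitsOver M (progAtoms Pi) ∧
    AnswerSet (aspAbs Pi C) (Mplus M) ∧ cspSolvable C γ M

/-- `M` is an answer set of the CA program `P`. -/
def CAProgram.answerSet [DecidableEq α] (P : CAProgram α V D) (M : Set (Lit α)) : Prop :=
  CAAnswerSetG P.prog P.catoms P.γ M

/-- The CA program with components `Π`, `C` asp-entails the denial `G`. -/
def aspEntailsDenial [DecidableEq α] (Pi : Finset (Rule α)) (C : Finset α) (G : Rule α) : Prop :=
  ∀ M : Set (Lit α), LConsistent M → LComplete M (progAtoms Pi) → LitsOver M (progAtoms Pi) →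
    AnswerSet (aspAbs Pi C) (Mplus M) → clauseSat (Mplus M) G

/-- The CA program with components `Π`, `C`, `γ` cp-entails the denial `G`. -/
def cpEntailsDenial [DecidableEq α] (Pi : Finset (Rule α)) (C : Finset α)
    (γ : α → Constraint V D) (G : Rule α) : Prop :=
  (∀ M : Set (Lit α), CAAnswerSetG Pi C γ M → clauseSat (Mplus M) G) ∧
  (∃ N : Set (Lit α), LConsistent N ∧ LComplete N (progAtoms Pi) ∧ LitsOver N (progAtoms Pi) ∧
    AnswerSet (aspAbs Pi C) (Mplus N) ∧ ¬ clauseSat (Mplus N) G)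

/-- The CA program with components `Π`, `C`, `γ` entails the denial `G`. -/
def entailsDenial [DecidableEq α] (Pi : Finset (Rule α)) (C : Finset α)
    (γ : α → Constraint V D) (G : Rule α) : Prop :=
  aspEntailsDenial Pi C G ∨ cpEntailsDenial Pi C γ G

/-- The CA program with components `Π`, `C` asp-entails the literal `l` with respect to
the consistent set `N` of literals. -/
def aspEntailsLit [DecidableEq α] (Pi : Finset (Rule α)) (C : Finset α)
    (N : Set (Lit α)) (l : Lit α) : Prop :=
  ∀ M : Set (Lit α), LConsistent M → LComplete M (progAtoms Pi) → LitsOver M (progAtoms Pi) →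
    AnswerSet (aspAbs Pi C) (Mplus M) → N ⊆ M → l ∈ M

/-- `P[Γ]`: the CA program `P` with the denials of `Γ` added to its program. -/
def CAProgram.addDenials [DecidableEq α] (P : CAProgram α V D) (Γ : Finset (Rule α))
    (hΓ : ∀ r ∈ Γ, r.head = none) : CAProgram α V D where
  prog := P.prog ∪ Γ
  catoms := P.catoms
  γ := P.γ
  head_not_catom := by
    intro r hr a ha
    rcases Finset.mem_union.mp hr with h | h
    · exact P.head_not_catom r h a ha
    · rw [hΓ r h] at ha; simp at ha
  catoms_sub := by
    intro a ha
    have h1 := P.catoms_sub ha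
    unfold progAtoms at h1 ⊢
    rw [Finset.mem_biUnion] at h1 ⊢
    obtain ⟨r, hr, har⟩ := h1
    exact ⟨r, Finset.mem_union_left _ hr, har⟩

/-! ### The transition system `EZ_P` -/

/-- An element of a record: a literal, possibly annotated as a decision literal
(`dec = true`), or the symbol `⊥`. -/
inductive RecElem (α : Type) where
  | lit (l : Lit α) (dec : Bool)
  | bot
deriving DecidableEq

/-- The set of literals occurring in a record (disregarding annotations). -/
def recLits {α : Type} (M : List (RecElem α)) : Set (Lit α) :=
  {l | ∃ d : Bool, RecElem.lit l d ∈ M}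

/-- The underlying "key" of a record element (used to state distinctness). -/
def recKey {α : Type} : RecElem α → Option (Lit α)
  | .lit l _ => some l
  | .bot => none

/-- A record contains no decision literals. -/
def recDecFree {α : Type} (M : List (RecElem α)) : Prop :=
  ∀ l : Lit α, RecElem.lit l true ∉ M

/-- Consistency of (the state determined by) a record: `⊥` does not occur in it and
no atom occurs both positively and negatively. -/
def RecConsistent {α : Type} (M : List (RecElem α)) : Prop :=
  RecElem.bot ∉ M ∧ ∀ a : α, ¬((a, true) ∈ recLits M ∧ (a, false) ∈ recLits M)

/-- A record relative to the alphabet `σ`. -/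
def IsRecord [DecidableEq α] (σ : Finset α) (M : List (RecElem α)) : Prop :=
  (M.map recKey).Nodup ∧
  (∀ l ∈ recLits M, l.1 ∈ σ) ∧
  ((∀ a : α, ¬((a, true) ∈ recLits M ∧ (a, false) ∈ recLits M)) ∨
    ∃ (M' : List (RecElem α)) (l : Lit α) (d : Bool),
      M = M' ++ [RecElem.lit l d] ∧
      (∀ a : α, ¬((a, true) ∈ recLits M' ∧ (a, false) ∈ recLits M')) ∧
      complLit l ∈ recLits M') ∧
  (∀ (M₁ M₂ : List (RecElem α)) (l : Lit α), M = M₁ ++ RecElem.lit l true :: M₂ →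
    l ∉ recLits M₁ ∧ complLit l ∉ recLits M₁) ∧
  (RecElem.bot ∈ M → ∃ M' : List (RecElem α), M = M' ++ [RecElem.bot] ∧ RecElem.bot ∉ M')

/-- A state of the computation: `Failstate` or a triple `M‖Γ‖Λ`. -/
inductive EZState (α : Type) where
  | fail
  | node (M : List (RecElem α)) (Γ Λ : Finset (Rule α))

/-- `Γ` is a set of denials over `At(Π)` entailed by `P`. -/
def DenialsEntailed [DecidableEq α] (P : CAProgram α V D) (Γ : Finset (Rule α)) : Prop :=
  ∀ r ∈ Γ, r.head = none ∧ r.atoms ⊆ progAtoms P.prog ∧ entailsDenial P.prog P.catoms P.γ r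

/-- The nodes of the graph `EZ_P`: states relative to `P`. -/
def IsState [DecidableEq α] (P : CAProgram α V D) : EZState α → Prop
  | .fail => True
  | .node M Γ Λ => IsRecord (progAtoms P.prog) M ∧ DenialsEntailed P Γ ∧ DenialsEntailed P Λ

/-- The names of the transition rules of the graph `EZ_P`. -/
inductive TransLabel where
  | decide | fail | backtrack | aspProp | cpProp | learn | learnT | restart | restartT
deriving DecidableEq

/-- Basic transition rules. -/
def TransLabel.isBasic : TransLabel → Prop
  | .decide => True
  | .fail => True
  | .backtrack => True
  | .aspProp => True
  | .cpProp => True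
  | _ => False

/-- Restart transition rules. -/
def TransLabel.isRestart : TransLabel → Prop
  | .restart => True
  | .restartT => True
  | _ => False

/-- A literal is unassigned by a record. -/
def Unassigned {α : Type} (M : List (RecElem α)) (l : Lit α) : Prop :=
  l ∉ recLits M ∧ complLit l ∉ recLits M

/-- The defining conditions of the transition rules of the graph `EZ_P`. -/
inductive EdgeCond [DecidableEq α] (P : CAProgram α V D) :
    TransLabel → EZState α → EZState α → Prop
  | decide (M : List (RecElem α)) (Γ Λ : Finset (Rule α)) (l : Lit α)
      (h1 : Unassigned M l) (h2 : RecConsistent M) :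
      EdgeCond P .decide (.node M Γ Λ) (.node (M ++ [RecElem.lit l true]) Γ Λ)
  | fail (M : List (RecElem α)) (Γ Λ : Finset (Rule α))
      (h1 : ¬ RecConsistent M) (h2 : recDecFree M) :
      EdgeCond P .fail (.node M Γ Λ) .fail
  | backtrack (M₁ M₂ : List (RecElem α)) (Γ Λ : Finset (Rule α)) (l : Lit α)
      (h1 : ¬ RecConsistent (M₁ ++ RecElem.lit l true :: M₂))
      (h2 : recDecFree M₂) :
      EdgeCond P .backtrack (.node (M₁ ++ RecElem.lit l true :: M₂) Γ Λ)
        (.node (M₁ ++ [RecElem.lit (complLit l) false]) Γ Λ)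
  | aspProp (M : List (RecElem α)) (Γ Λ : Finset (Rule α)) (l : Lit α)
      (h : aspEntailsLit (P.prog ∪ Γ ∪ Λ) P.catoms (recLits M) l) :
      EdgeCond P .aspProp (.node M Γ Λ) (.node (M ++ [RecElem.lit l false]) Γ Λ)
  | cpProp (M : List (RecElem α)) (Γ Λ : Finset (Rule α))
      (h : ¬ cspSolvable P.catoms P.γ (recLits M)) :
      EdgeCond P .cpProp (.node M Γ Λ) (.node (M ++ [RecElem.bot]) Γ Λ)
  | learn (M : List (RecElem α)) (Γ Λ : Finset (Rule α)) (R : Rule α)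
      (h1 : entailsDenial (P.prog ∪ Γ ∪ Λ) P.catoms P.γ R)
      (h2 : R ∉ Γ ∪ Λ) :
      EdgeCond P .learn (.node M Γ Λ) (.node M (insert R Γ) Λ)
  | learnT (M : List (RecElem α)) (Γ Λ : Finset (Rule α)) (R : Rule α)
      (h1 : entailsDenial (P.prog ∪ Γ ∪ Λ) P.catoms P.γ R)
      (h2 : R ∉ Γ ∪ Λ) :
      EdgeCond P .learnT (.node M Γ Λ) (.node M Γ (insert R Λ))
  | restart (M : List (RecElem α)) (Γ Λ : Finset (Rule α)) (h : M ≠ []) :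
      EdgeCond P .restart (.node M Γ Λ) (.node [] Γ Λ)
  | restartT (M : List (RecElem α)) (Γ Λ : Finset (Rule α)) (h : M ≠ []) :
      EdgeCond P .restartT (.node M Γ Λ) (.node [] Γ ∅)

/-- The edges of the graph `EZ_P`: both endpoints are states relative to `P` and the edge
is justified by the transition rule `t`. -/
def Step [DecidableEq α] (P : CAProgram α V D) (t : TransLabel) (s s' : EZState α) : Prop :=
  IsState P s ∧ IsState P s' ∧ EdgeCond P t s s'

/-- A state is semi-terminal when no basic transition rule is applicable to it. -/
def SemiTerminal [DecidableEq α] (P : CAProgram α V D) (s : EZState α) : Prop :=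
  ¬ ∃ (t : TransLabel) (s' : EZState α), t.isBasic ∧ Step P t s s'

/-- The initial state `∅‖∅‖∅`. -/
def initState (α : Type) : EZState α := EZState.node [] ∅ ∅

/-- Reachability in the graph determined by a labeled step relation. -/
def Reach {α : Type} (step : TransLabel → EZState α → EZState α → Prop)
    (s s' : EZState α) : Prop :=
  Relation.ReflTransGen (fun x y => ∃ t : TransLabel, step t x y) s s'

/-- A finite labeled path in the graph determined by a labeled step relation
(only `states 0, …, states len` and `labs 0, …, labs (len-1)` are meaningful). -/
structure LPath {α : Type} (step : TransLabel → EZState α → EZState α → Prop) where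
  len : ℕ
  states : ℕ → EZState α
  labs : ℕ → TransLabel
  valid : ∀ i < len, step (labs i) (states i) (states (i + 1))

/-- A finite path is restart-safe: prior to any edge `e` due to Restart or Restart^t
there is an edge `e'` due to Learn preceding `e` and preceding no other Restart or
Restart^t edge different from `e`. -/
def LPath.RestartSafe {α : Type} {step : TransLabel → EZState α → EZState α → Prop}
    (t : LPath step) : Prop :=
  ∀ i < t.len, (t.labs i).isRestart →
    ∃ j < i, t.labs j = TransLabel.learn ∧
      ∀ k, j < k → k < t.len → (t.labs k).isRestart → k = i

/-- `t` is a subpath of `t'`. -/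
def LPath.Subpath {α : Type} {step : TransLabel → EZState α → EZState α → Prop}
    (t t' : LPath step) : Prop :=
  ∃ d, t.len + d ≤ t'.len ∧ (∀ i ≤ t.len, t.states i = t'.states (d + i)) ∧
    (∀ i < t.len, t.labs i = t'.labs (d + i))

/-- Two finite paths are equal (as paths). -/
def LPath.Equiv {α : Type} {step : TransLabel → EZState α → EZState α → Prop}
    (t t' : LPath step) : Prop :=
  t.len = t'.len ∧ (∀ i ≤ t.len, t.states i = t'.states i) ∧
    (∀ i < t.len, t.labs i = t'.labs i)

/-- An infinite restart-safe sequence of edge labels. -/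
def InfRestartSafe (labs : ℕ → TransLabel) : Prop :=
  ∀ i, (labs i).isRestart →
    ∃ j < i, labs j = TransLabel.learn ∧ ∀ k, j < k → (labs k).isRestart → k = i

/-! ### The measure for Statement 14 -/

/-- The sequence `α(M) = |M₀|,|M₁|,…,|M_p|` of the lengths of the segments of a record
determined by its decision literals. -/
def alphaSeq {α : Type} : List (RecElem α) → List ℕ
  | [] => [0]
  | RecElem.lit _ true :: rest => 0 :: alphaSeq rest
  | _ :: rest =>
    match alphaSeq rest with
    | [] => [1]
    | h :: tl => (h + 1) :: tl

/-- The "smaller" relation on states. -/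
def Smaller [DecidableEq α] : EZState α → EZState α → Prop
  | .node M Γ Λ, .node M' Γ' Λ' =>
      Γ ⊂ Γ' ∨ (Γ = Γ' ∧ Λ ⊂ Λ') ∨
        (Γ = Γ' ∧ Λ = Λ' ∧ List.Lex (· < ·) (alphaSeq M) (alphaSeq M'))
  | _, _ => False

/-! ### The graph `EZSM_P` -/

/-- The set of literals of the clause corresponding to a rule. -/
def clauseLits (r : Rule α) : Set (Lit α) :=
  {l | (∃ a, r.head = some a ∧ l = (a, true)) ∨ (∃ a ∈ r.pos, l = (a, false)) ∨
    (∃ a ∈ r.neg, l = (a, true)) ∨ (∃ a ∈ r.dneg, l = (a, false))}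

/-- The condition of the Unit Propagate rule: there is a clause `C ∨ l` in
`(Π[𝒞]∪Γ∪Λ)^cl`, `M` is consistent, and `M` satisfies `C̄`. -/
def UnitPropCond [DecidableEq α] (P : CAProgram α V D) (Γ Λ : Finset (Rule α))
    (M : List (RecElem α)) (l : Lit α) : Prop :=
  RecConsistent M ∧
    ∃ r ∈ aspAbs P.prog P.catoms ∪ Γ ∪ Λ,
      l ∈ clauseLits r ∧ ∀ l' ∈ clauseLits r, l' ≠ l → complLit l' ∈ recLits M

/-- The condition of the Unfounded rule: `M` is consistent and `l̄ ∈ U` for a set `U`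
unfounded on `M` with respect to `Π[𝒞]∪Γ∪Λ`. -/
def UnfoundedCond [DecidableEq α] (P : CAProgram α V D) (Γ Λ : Finset (Rule α))
    (M : List (RecElem α)) (l : Lit α) : Prop :=
  RecConsistent M ∧
    ∃ U : Set α, UnfoundedOn (aspAbs P.prog P.catoms ∪ Γ ∪ Λ) (recLits M) U ∧
      l.2 = false ∧ l.1 ∈ U

/-- The edges of the graph `EZSM_P`: those edges of `EZ_P` whose `ASP-Propagate`
applications are justified by `Unit Propagate` or `Unfounded`. -/
def StepSM [DecidableEq α] (P : CAProgram α V D) (t : TransLabel) (s s' : EZState α) : Prop :=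
  Step P t s s' ∧
    (t = TransLabel.aspProp →
      ∃ (M : List (RecElem α)) (Γ Λ : Finset (Rule α)) (l : Lit α),
        s = EZState.node M Γ Λ ∧ s' = EZState.node (M ++ [RecElem.lit l false]) Γ Λ ∧
        (UnitPropCond P Γ Λ M l ∨ UnfoundedCond P Γ Λ M l))

/-- A state is semi-terminal in `EZSM_P` when no basic rule of `EZSM_P` applies to it. -/
def SemiTerminalSM [DecidableEq α] (P : CAProgram α V D) (s : EZState α) : Prop :=
  ¬ ∃ (t : TransLabel) (s' : EZState α), t.isBasic ∧ StepSM P t s s'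

/-! ### The graph `EZ^b_P` (black-box configuration) -/

/-- The edge-level restrictions of the black-box strategy. -/
def StepB [DecidableEq α] (P : CAProgram α V D) (t : TransLabel) (s s' : EZState α) : Prop :=
  Step P t s s' ∧
  t ≠ TransLabel.restart ∧
  (t = TransLabel.cpProp →
    ¬ ∃ (t' : TransLabel) (s'' : EZState α),
      (t' = TransLabel.decide ∨ t' = TransLabel.backtrack ∨ t' = TransLabel.fail ∨
        t' = TransLabel.aspProp) ∧ Step P t' s s'') ∧
  (t = TransLabel.learnT → ∀ (M : List (RecElem α)) (Γ Λ Λ' : Finset (Rule α)),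
    s = EZState.node M Γ Λ → s' = EZState.node M Γ Λ' →
    ∀ R ∈ Λ', R ∉ Λ → aspEntailsDenial P.prog P.catoms R) ∧
  (t = TransLabel.learn → ∀ (M : List (RecElem α)) (Γ Γ' Λ : Finset (Rule α)),
    s = EZState.node M Γ Λ → s' = EZState.node M Γ' Λ →
    ∀ R ∈ Γ', R ∉ Γ → cpEntailsDenial P.prog P.catoms P.γ R)

/-- The path-level restrictions of the black-box strategy: Learn applies only immediately
after CP-Propagate, and Restart^t applies immediately after Learn and only then. -/
def BlackBoxPath [DecidableEq α] {P : CAProgram α V D} (t : LPath (StepB P)) : Prop :=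
  (∀ i < t.len, t.labs i = TransLabel.learn → 0 < i ∧ t.labs (i - 1) = TransLabel.cpProp) ∧
  (∀ i < t.len, t.labs i = TransLabel.restartT → 0 < i ∧ t.labs (i - 1) = TransLabel.learn) ∧
  (∀ i, i + 1 < t.len → t.labs i = TransLabel.learn → t.labs (i + 1) = TransLabel.restartT)

/-- A state is semi-terminal in `EZ^b_P` when no basic rule of `EZ^b_P` applies to it. -/
def SemiTerminalB [DecidableEq α] (P : CAProgram α V D) (s : EZState α) : Prop :=
  ¬ ∃ (t : TransLabel) (s' : EZState α), t.isBasic ∧ StepB P t s s'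

/-!
Outside the two Restart rules, every edge of `EZ_P` leads to a strictly larger state in the
order `Smaller`: Learn enlarges `Γ`, Learn^t enlarges `Λ` and leaves `Γ` alone, and the basic
rules keep `Γ` and `Λ` and increase `α(M)` lexicographically. Since `At(Π)` is finite, there are
only finitely many states, so a path along which the state keeps growing is finite. Restart
safety allows at most one restart on a path, after which the state would have to grow forever.
-/

theorem _root_.List.modifyLast_singleton {β : Type*} (f : β → β) (a : β) :
    [a].modifyLast f = [f a] :=
  List.modifyLast_concat f a []

theorem _root_.List.modifyLast_cons_of_ne_nil {β : Type*} (f : β → β) (a : β) {l : List β}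
    (hl : l ≠ []) : (a :: l).modifyLast f = a :: l.modifyLast f :=
  List.modifyLast_append_of_right_ne_nil f [a] l hl

theorem _root_.List.append_lt_modifyLast_succ {L : List ℕ} (hL : L ≠ []) (S : List ℕ) :
    L ++ S < L.modifyLast (· + 1) := by
  obtain ⟨L, h, rfl⟩ := (List.eq_nil_or_concat' L).resolve_left hL
  rw [List.modifyLast_concat, List.append_assoc]
  exact List.append_left_lt (List.Lex.rel (Nat.lt_succ_self h))

theorem _root_.List.finite_setOf_nodup_forall_mem {β : Type*} {s : Set β} (hs : s.Finite) :
    {l : List β | l.Nodup ∧ ∀ x ∈ l, x ∈ s}.Finite := by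
  classical
  have := hs.to_subtype
  refine ((List.finite_length_le s hs.toFinset.card).image (List.map Subtype.val)).subset ?_
  rintro l ⟨hnd, hl⟩
  refine ⟨l.attach.map fun x => ⟨x.1, hl x.1 x.2⟩, ?_, by simp⟩
  change List.length _ ≤ _
  rw [List.length_map, List.length_attach, ← List.toFinset_card_of_nodup hnd]
  exact Finset.card_le_card fun x hx => by simpa using hl x (List.mem_toFinset.mp hx)

theorem _root_.Set.infinite_range_of_forall_rel_succ {β : Type*} {r : β → β → Prop}
    [IsStrictOrder β r] {f : ℕ → β} (hf : ∀ n, r (f n) (f (n + 1))) : (Set.range f).Infinite := by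
  refine Set.infinite_range_of_injective fun m n hmn => ?_
  by_contra hne
  rcases Nat.lt_or_gt_of_ne hne with h | h <;>
    exact irrefl_of r (f n) (hmn ▸ Nat.rel_of_forall_rel_succ_of_lt r hf h :)

theorem alphaSeq_ne_nil : ∀ M : List (RecElem α), alphaSeq M ≠ []
  | [] => by simp [alphaSeq]
  | .lit _ true :: _ => by simp [alphaSeq]
  | .lit _ false :: M | .bot :: M => by
    simp only [alphaSeq]
    split <;> simp

theorem alphaSeq_append_decision (A B : List (RecElem α)) (l : Lit α) :
    alphaSeq (A ++ .lit l true :: B) = alphaSeq A ++ alphaSeq B := by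
  induction A with
  | nil => simp [alphaSeq]
  | cons e A ih =>
    obtain ⟨h, t, ht⟩ := List.exists_cons_of_ne_nil (alphaSeq_ne_nil A)
    rcases e with ⟨l', _ | _⟩ | _ <;> simp [alphaSeq, ih, ht]

theorem alphaSeq_concat (A : List (RecElem α)) {x : RecElem α} (hx : ∀ l, x ≠ .lit l true) :
    alphaSeq (A ++ [x]) = (alphaSeq A).modifyLast (· + 1) := by
  induction A with
  | nil =>
    rcases x with ⟨l, _ | _⟩ | _
    · simp [alphaSeq, List.modifyLast_singleton]
    · exact absurd rfl (hx l)
    · simp [alphaSeq, List.modifyLast_singleton]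
  | cons e A ih =>
    obtain ⟨h, t, ht⟩ := List.exists_cons_of_ne_nil (alphaSeq_ne_nil A)
    rcases e with ⟨l', _ | _⟩ | _ <;> rcases t with _ | ⟨a, t⟩ <;>
      simp [alphaSeq, ih, ht, List.modifyLast_singleton, List.modifyLast_cons_of_ne_nil]

theorem alphaSeq_lt_append_decision (M : List (RecElem α)) (l : Lit α) :
    alphaSeq M < alphaSeq (M ++ [.lit l true]) := by
  simpa [alphaSeq_append_decision, alphaSeq] using
    List.append_left_lt (l₁ := alphaSeq M) (List.nil_lt_cons 0 [])

theorem alphaSeq_lt_concat (M : List (RecElem α)) {x : RecElem α} (hx : ∀ l, x ≠ .lit l true) :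
    alphaSeq M < alphaSeq (M ++ [x]) := by
  simpa [alphaSeq_concat M hx] using List.append_lt_modifyLast_succ (alphaSeq_ne_nil M) []

theorem alphaSeq_lt_backtrack (M₁ M₂ : List (RecElem α)) (l l' : Lit α) :
    alphaSeq (M₁ ++ .lit l true :: M₂) < alphaSeq (M₁ ++ [.lit l' false]) := by
  rw [alphaSeq_append_decision, alphaSeq_concat M₁ (by simp)]
  exact List.append_lt_modifyLast_succ (alphaSeq_ne_nil M₁) _

section Smaller

variable [DecidableEq α]

instance : IsStrictOrder (EZState α) Smaller where
  irrefl s := by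
    cases s <;> simp [Smaller]
  trans a b c hab hbc := by
    cases a <;> cases b <;> cases c <;> simp only [Smaller] at hab hbc ⊢
    rcases hab with h₁ | ⟨rfl, h₁⟩ | ⟨rfl, rfl, h₁⟩ <;>
      rcases hbc with h₂ | ⟨rfl, h₂⟩ | ⟨rfl, rfl, h₂⟩
    all_goals first
      | exact Or.inl (h₁.trans h₂) | exact Or.inl h₁ | exact Or.inl h₂
      | exact Or.inr (Or.inl ⟨rfl, h₁.trans h₂⟩) | exact Or.inr (Or.inl ⟨rfl, h₁⟩)
      | exact Or.inr (Or.inl ⟨rfl, h₂⟩) | exact Or.inr (Or.inr ⟨rfl, rfl, List.lt_trans h₁ h₂⟩)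

theorem smaller_node_of_alphaSeq_lt {M M' : List (RecElem α)} {Γ Λ : Finset (Rule α)}
    (h : alphaSeq M < alphaSeq M') : Smaller (.node M Γ Λ) (.node M' Γ Λ) :=
  Or.inr (Or.inr ⟨rfl, rfl, h⟩)

variable {P : CAProgram α V D} {t : TransLabel} {s s' : EZState α}

theorem EdgeCond.source_ne_fail (h : EdgeCond P t s s') : s ≠ .fail := by
  cases h <;> simp

theorem EdgeCond.smaller (h : EdgeCond P t s s') (ht : ¬ t.isRestart) (hs' : s' ≠ .fail) :
    Smaller s s' := by
  cases h with
  | decide M _ _ l => exact smaller_node_of_alphaSeq_lt (alphaSeq_lt_append_decision M l)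
  | fail => exact absurd rfl hs'
  | backtrack M₁ M₂ _ _ l => exact smaller_node_of_alphaSeq_lt (alphaSeq_lt_backtrack M₁ M₂ _ _)
  | aspProp M => exact smaller_node_of_alphaSeq_lt (alphaSeq_lt_concat M (by simp))
  | cpProp M => exact smaller_node_of_alphaSeq_lt (alphaSeq_lt_concat M (by simp))
  | learn _ _ _ _ _ hR =>
    exact Or.inl (Finset.ssubset_insert fun h => hR (Finset.mem_union_left _ h))
  | learnT _ _ _ _ _ hR =>
    exact Or.inr (Or.inl ⟨rfl, Finset.ssubset_insert fun h => hR (Finset.mem_union_right _ h)⟩)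
  | restart | restartT => exact absurd trivial ht

end Smaller

theorem finite_setOf_recElem_over (σ : Finset α) :
    {e : RecElem α | ∀ l d, e = .lit l d → l.1 ∈ σ}.Finite := by
  refine ((Set.finite_range fun p : σ × Bool × Bool => RecElem.lit (p.1.1, p.2.1) p.2.2).insert
    .bot).subset ?_
  rintro (⟨⟨a, b⟩, d⟩ | _) h
  · exact Or.inr ⟨(⟨a, h _ _ rfl⟩, b, d), rfl⟩
  · exact Or.inl rfl

section Finiteness

variable [DecidableEq α]

theorem finite_setOf_isRecord (σ : Finset α) : {M | IsRecord σ M}.Finite := by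
  refine (List.finite_setOf_nodup_forall_mem (finite_setOf_recElem_over σ)).subset ?_
  rintro M ⟨hkeys, hover, -⟩
  exact ⟨hkeys.of_map recKey, fun e he l d hl => hover l ⟨d, hl ▸ he⟩⟩

theorem finite_setOf_denial_over (σ : Finset α) :
    {r : Rule α | r.head = none ∧ r.atoms ⊆ σ}.Finite := by
  refine ((σ.powerset ×ˢ σ.powerset ×ˢ σ.powerset).image
    fun p => (⟨none, p.1, p.2.1, p.2.2⟩ : Rule α)).finite_toSet.subset ?_
  rintro ⟨h, pos, neg, dneg⟩ ⟨rfl, hσ⟩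
  simp only [Rule.atoms, Finset.union_subset_iff] at hσ
  simp [hσ]

theorem finite_setOf_denialsEntailed (P : CAProgram α V D) :
    {Γ | DenialsEntailed P Γ}.Finite := by
  refine (((finite_setOf_denial_over (progAtoms P.prog)).finite_subsets).preimage
    Finset.coe_injective.injOn).subset ?_
  intro Γ hΓ r hr
  exact ⟨(hΓ r hr).1, (hΓ r hr).2.1⟩

theorem finite_setOf_isState (P : CAProgram α V D) : {s | IsState P s}.Finite := by
  refine ((((finite_setOf_isRecord (progAtoms P.prog)).prod
    ((finite_setOf_denialsEntailed P).prod (finite_setOf_denialsEntailed P))).image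
    fun x => EZState.node x.1 x.2.1 x.2.2).insert .fail).subset ?_
  rintro (_ | ⟨M, Γ, Λ⟩) h
  · exact Or.inl rfl
  · exact Or.inr ⟨(M, Γ, Λ), h, rfl⟩

end Finiteness

theorem InfRestartSafe.eq_of_isRestart {labs : ℕ → TransLabel} (h : InfRestartSafe labs)
    {i j : ℕ} (hi : (labs i).isRestart) (hj : (labs j).isRestart) : i = j := by
  wlog hij : i ≤ j generalizing i j
  · exact (this hj hi (by omega)).symm
  obtain ⟨k, hki, -, hk⟩ := h i hi
  exact (hk j (by omega) hj).symm

theorem InfRestartSafe.exists_forall_not_isRestart {labs : ℕ → TransLabel}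
    (h : InfRestartSafe labs) : ∃ N, ∀ n, ¬ (labs (N + n)).isRestart := by
  by_cases hr : ∃ i, (labs i).isRestart
  · obtain ⟨i, hi⟩ := hr
    exact ⟨i + 1, fun n hn => by have := h.eq_of_isRestart hi hn; omega⟩
  · exact ⟨0, fun n hn => hr ⟨_, hn⟩⟩

theorem stmt8 [DecidableEq α] (P : CAProgram α V D) :
    ¬ ∃ (states : ℕ → EZState α) (labs : ℕ → TransLabel),
      (∀ i, Step P (labs i) (states i) (states (i + 1))) ∧ InfRestartSafe labs := by
  rintro ⟨states, labs, hstep, hsafe⟩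
  obtain ⟨N, hN⟩ := hsafe.exists_forall_not_isRestart
  have hgrow : ∀ n, Smaller (states (N + n)) (states (N + (n + 1))) := fun n =>
    (hstep (N + n)).2.2.smaller (hN n) (hstep (N + n + 1)).2.2.source_ne_fail
  refine Set.infinite_range_of_forall_rel_succ (f := (states <| N + ·)) hgrow
    ((finite_setOf_isState P).subset ?_)
  rintro _ ⟨n, rfl⟩
  exact (hstep (N + n)).1

end EZCSP
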